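/- arXiv:1606.05021 — 3 statements merged into one kernel-verified Lean document; each statement's English description precedes it below -/
import Mathlib

section
/- Let Φ₀ be an n×d₀ real matrix of full column rank d₀ and Φ an n×k real matrix of full column rank k with d₀ < k, such that the column space of Φ₀ is strictly contained in the column space of Φ. Let Q₀ = Φ₀(Φ₀ᵀΦ₀)⁻¹Φ₀ᵀ and Q_Φ = Φ(ΦᵀΦ)⁻¹Φᵀ be the orthogonal projection matrices onto the column spaces. Then for any ω ∈ (0,1), Φ(ΦᵀΦ + (ω/(1-ω))·Φᵀ(I-Q₀)Φ)⁻¹Φᵀ = (1-ω)·Q_Φ + ω·Q₀. -/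
/-!
Write `A = ΦᵀΦ` and `S = Φᵀ Q₀ Φ`, so the matrix to invert is `A + t (A - S)` with
`t = ω / (1 - ω)`. Because the column space of `Φ₀` lies in that of `Φ`, the projections satisfy
`Q₀ Q_Φ Q₀ = Q₀`, hence `S A⁻¹ S = S`, and with this one checks directly that the inverse is
`(1 - ω) A⁻¹ + ω A⁻¹ S A⁻¹`. Sandwiching it between `Φ` and `Φᵀ` gives
`(1 - ω) Q_Φ + ω Q_Φ Q₀ Q_Φ = (1 - ω) Q_Φ + ω Q₀`.
-/

open Matrix

namespace Matrix

variable {m n p K : Type*} [Fintype m] [Fintype n] [DecidableEq n] [Field K]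

theorem isUnit_of_rank_eq_card (M : Matrix n n K) (h : M.rank = Fintype.card n) : IsUnit M := by
  refine mulVec_surjective_iff_isUnit.mp ((LinearMap.range_eq_top (f := M.mulVecLin)).mp ?_)
  exact Submodule.eq_top_of_finrank_eq (by rwa [Module.finrank_fintype_fun_eq_card])

theorem isUnit_transpose_mul_self_of_rank_eq_card [LinearOrder K] [IsStrictOrderedRing K]
    (A : Matrix m n K) (h : A.rank = Fintype.card n) : IsUnit (Aᵀ * A) :=
  isUnit_of_rank_eq_card _ (by rw [rank_transpose_mul_self, h])

/-- The orthogonal projection onto the column space of `A` (a junk value unless `Aᵀ * A` is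
invertible). -/
noncomputable def colProj (A : Matrix m n K) : Matrix m m K := A * (Aᵀ * A)⁻¹ * Aᵀ

theorem colProj_transpose (A : Matrix m n K) : (colProj A)ᵀ = colProj A := by
  simp only [colProj, transpose_mul, transpose_transpose, transpose_nonsing_inv, Matrix.mul_assoc]

variable {A : Matrix m n K}

theorem colProj_mulVec_of_mem_range (hA : IsUnit (Aᵀ * A)) {v : m → K}
    (hv : v ∈ LinearMap.range A.mulVecLin) : colProj A *ᵥ v = v := by
  obtain ⟨x, rfl⟩ := hv
  rw [mulVecLin_apply, mulVec_mulVec, colProj, Matrix.mul_assoc, Matrix.mul_assoc,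
    nonsing_inv_mul _ ((isUnit_iff_isUnit_det _).mp hA), Matrix.mul_one]

theorem colProj_mul_of_range_le (hA : IsUnit (Aᵀ * A)) {B : Matrix m p K} [Fintype p]
    (hB : LinearMap.range B.mulVecLin ≤ LinearMap.range A.mulVecLin) : colProj A * B = B :=
  ext_iff_mulVec.mpr fun v => by
    rw [← mulVec_mulVec]
    exact colProj_mulVec_of_mem_range hA (hB (LinearMap.mem_range_self _ v))

theorem colProj_mul_colProj_of_range_le (hA : IsUnit (Aᵀ * A)) {B : Matrix m p K} [Fintype p]
    [DecidableEq p] (hB : LinearMap.range B.mulVecLin ≤ LinearMap.range A.mulVecLin) :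
    colProj A * colProj B = colProj B := by
  rw [colProj, colProj, ← Matrix.mul_assoc, ← Matrix.mul_assoc, ← colProj,
    colProj_mul_of_range_le hA hB]

theorem colProj_mul_colProj_of_range_le' (hA : IsUnit (Aᵀ * A)) {B : Matrix m p K} [Fintype p]
    [DecidableEq p] (hB : LinearMap.range B.mulVecLin ≤ LinearMap.range A.mulVecLin) :
    colProj B * colProj A = colProj B := by
  simpa only [transpose_mul, colProj_transpose] using
    congrArg transpose (colProj_mul_colProj_of_range_le hA hB)

theorem transpose_mul_mul_self_mul_inv_mul_self (A : Matrix m n K) {Q : Matrix m m K}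
    (hQ : Q * colProj A * Q = Q) :
    (Aᵀ * Q * A) * (Aᵀ * A)⁻¹ * (Aᵀ * Q * A) = Aᵀ * Q * A := by
  conv_rhs => rw [← hQ]
  simp only [colProj, Matrix.mul_assoc]

theorem inv_add_smul_sub_eq {A S : Matrix n n K} (hA : IsUnit A.det) (hS : S * A⁻¹ * S = S)
    {ω : K} (hω : ω ≠ 1) :
    (A + (ω / (1 - ω)) • (A - S))⁻¹ = (1 - ω) • A⁻¹ + ω • (A⁻¹ * S * A⁻¹) := by
  refine inv_eq_left_inv ?_
  have h1ω : 1 - ω ≠ 0 := sub_ne_zero.mpr hω.symm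
  simp only [Matrix.mul_add, Matrix.add_mul, Matrix.mul_sub, Matrix.mul_smul, Matrix.smul_mul,
    nonsing_inv_mul _ hA, Matrix.mul_assoc, hS, Matrix.mul_one]
  match_scalars <;> field_simp <;> ring

end Matrix

theorem fhs_projection_identity_general (n d₀ k : ℕ)
    (Φ₀ : Matrix (Fin n) (Fin d₀) ℝ) (Φ : Matrix (Fin n) (Fin k) ℝ)
    (hrank₀ : Φ₀.rank = d₀) (hrank : Φ.rank = k)
    (hsub : LinearMap.range Φ₀.mulVecLin < LinearMap.range Φ.mulVecLin)
    (ω : ℝ) (hω1 : ω < 1) :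
    Φ * (Φᵀ * Φ + (ω / (1 - ω)) • (Φᵀ * (1 - Φ₀ * (Φ₀ᵀ * Φ₀)⁻¹ * Φ₀ᵀ) * Φ))⁻¹ * Φᵀ =
      (1 - ω) • (Φ * (Φᵀ * Φ)⁻¹ * Φᵀ) + ω • (Φ₀ * (Φ₀ᵀ * Φ₀)⁻¹ * Φ₀ᵀ) := by
  have hΦ := isUnit_transpose_mul_self_of_rank_eq_card Φ (by rwa [Fintype.card_fin])
  have hΦ₀ := isUnit_transpose_mul_self_of_rank_eq_card Φ₀ (by rwa [Fintype.card_fin])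
  change Φ * (Φᵀ * Φ + (ω / (1 - ω)) • (Φᵀ * (1 - colProj Φ₀) * Φ))⁻¹ * Φᵀ =
    (1 - ω) • colProj Φ + ω • colProj Φ₀
  have hinner : colProj Φ₀ * colProj Φ * colProj Φ₀ = colProj Φ₀ := by
    rw [colProj_mul_colProj_of_range_le' hΦ hsub.le, colProj_mul_colProj_of_range_le hΦ₀ le_rfl]
  have houter : colProj Φ * colProj Φ₀ * colProj Φ = colProj Φ₀ := by
    rw [colProj_mul_colProj_of_range_le hΦ hsub.le, colProj_mul_colProj_of_range_le' hΦ hsub.le]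
  rw [Matrix.mul_sub, Matrix.sub_mul, Matrix.mul_one,
    inv_add_smul_sub_eq ((isUnit_iff_isUnit_det _).mp hΦ)
      (transpose_mul_mul_self_mul_inv_mul_self Φ hinner) hω1.ne,
    Matrix.mul_add, Matrix.add_mul, Matrix.mul_smul, Matrix.smul_mul, Matrix.mul_smul,
    Matrix.smul_mul]
  congr 2
  conv_rhs => rw [← houter]
  simp only [colProj, Matrix.mul_assoc]

/-- Lemma 1 (matrix form): if the column space of `Φ₀` is strictly contained in
that of `Φ`, both of full column rank, then for any `ω ∈ (0,1)`,
`Φ (ΦᵀΦ + (ω/(1-ω)) Φᵀ(I-Q₀)Φ)⁻¹ Φᵀ = (1-ω) Q_Φ + ω Q₀`. -/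
theorem fhs_projection_identity (n d₀ k : ℕ)
    (Φ₀ : Matrix (Fin n) (Fin d₀) ℝ) (Φ : Matrix (Fin n) (Fin k) ℝ)
    (hrank₀ : Φ₀.rank = d₀) (hrank : Φ.rank = k) (hdk : d₀ < k)
    (hsub : LinearMap.range Φ₀.mulVecLin < LinearMap.range Φ.mulVecLin)
    (ω : ℝ) (hω0 : 0 < ω) (hω1 : ω < 1) :
    Φ * (Φᵀ * Φ + (ω / (1 - ω)) • (Φᵀ * (1 - Φ₀ * (Φ₀ᵀ * Φ₀)⁻¹ * Φ₀ᵀ) * Φ))⁻¹ * Φᵀ =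
      (1 - ω) • (Φ * (Φᵀ * Φ)⁻¹ * Φᵀ) + ω • (Φ₀ * (Φ₀ᵀ * Φ₀)⁻¹ * Φ₀ᵀ) :=
  fhs_projection_identity_general n d₀ k Φ₀ Φ hrank₀ hrank hsub ω hω1
end

section
/- Let a > 0, b > 0, and H ≥ 0 be real numbers. Then ∫₀¹ ω^(a-1) (1-ω)^(b-1) exp(-Hω) dω ≤ exp(-H) · B(a,b) · (1 + (b/(a+b))·exp(H)), where B(a,b) = Γ(a)Γ(b)/Γ(a+b) is the Beta function. -/
/-!
Write `e^{-Hω} = e^{-H} e^{H(1-ω)}` and bound `e^{H(1-ω)}` by its chord,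
`1 + (1-ω)(e^H - 1)`, using convexity of `exp`. Integrating against the Beta kernel turns the
extra factor `1 - ω` into `B(a, b+1) = B(a,b) · b/(a+b)`, so the integral is at most
`e^{-H} B(a,b) (1 + (b/(a+b)) (e^H - 1))`.
-/

open Real intervalIntegral ProbabilityTheory

theorem ProbabilityTheory.beta_add_one_right {a b : ℝ} (hb : b ≠ 0) (hab : a + b ≠ 0) :
    beta a (b + 1) = beta a b * (b / (a + b)) := by
  rw [beta, beta, Gamma_add_one hb, ← add_assoc, Gamma_add_one hab]
  field_simp

theorem integral_rpow_mul_one_sub_rpow {a b : ℝ} (ha : 0 < a) (hb : 0 < b) :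
    ∫ x in (0 : ℝ)..1, x ^ (a - 1) * (1 - x) ^ (b - 1) = beta a b := by
  rw [beta_eq_betaIntegralReal a b ha hb, Complex.betaIntegral, ← Complex.ofReal_re
    (∫ x in (0 : ℝ)..1, x ^ (a - 1) * (1 - x) ^ (b - 1)), ← integral_ofReal]
  congr 1
  refine integral_congr fun x hx => ?_
  rw [Set.uIcc_of_le zero_le_one] at hx
  push_cast
  rw [Complex.ofReal_cpow hx.1, Complex.ofReal_cpow (sub_nonneg.2 hx.2)]
  push_cast
  ring

theorem intervalIntegrable_rpow_mul_one_sub_rpow {a b : ℝ} (ha : 0 < a) (hb : 0 < b) :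
    IntervalIntegrable (fun x : ℝ => x ^ (a - 1) * (1 - x) ^ (b - 1)) MeasureTheory.volume 0 1 :=
  intervalIntegrable_of_integral_ne_zero <| by
    rw [integral_rpow_mul_one_sub_rpow ha hb]
    exact (beta_pos ha hb).ne'

theorem integral_rpow_mul_one_sub_rpow_mul_one_sub {a b : ℝ} (ha : 0 < a) (hb : 0 < b) :
    ∫ x in (0 : ℝ)..1, x ^ (a - 1) * (1 - x) ^ (b - 1) * (1 - x) = beta a b * (b / (a + b)) := by
  rw [← beta_add_one_right hb.ne' (add_pos ha hb).ne',
    ← integral_rpow_mul_one_sub_rpow ha (by linarith)]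
  refine integral_congr fun x hx => ?_
  rw [Set.uIcc_of_le zero_le_one] at hx
  simp only [add_sub_cancel_right]
  rw [mul_assoc, ← rpow_add_one' (sub_nonneg.2 hx.2) (by simp [hb.ne']), sub_add_cancel]

theorem Real.exp_mul_le_one_add_mul_exp_sub_one {t : ℝ} (ht₀ : 0 ≤ t) (ht₁ : t ≤ 1) (x : ℝ) :
    exp (t * x) ≤ 1 + t * (exp x - 1) := by
  have := convexOn_exp.2 (Set.mem_univ 0) (Set.mem_univ x) (sub_nonneg.2 ht₁) ht₀
    (sub_add_cancel 1 t)
  simp only [smul_eq_mul, mul_zero, zero_add, exp_zero, mul_one] at this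
  linarith

theorem fhs_normalizing_upper_general (a b H : ℝ) (ha : 0 < a) (hb : 0 < b) :
    ∫ ω in (0:ℝ)..1, ω ^ (a - 1) * (1 - ω) ^ (b - 1) * Real.exp (-H * ω) ≤
      Real.exp (-H) * (Real.Gamma a * Real.Gamma b / Real.Gamma (a + b)) *
        (1 + (b / (a + b)) * Real.exp H) := by
  set f : ℝ → ℝ := fun x => x ^ (a - 1) * (1 - x) ^ (b - 1)
  have hf := intervalIntegrable_rpow_mul_one_sub_rpow ha hb
  have hf₁ : IntervalIntegrable (fun x => f x * (1 - x)) MeasureTheory.volume 0 1 :=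
    hf.mul_continuousOn (by fun_prop)
  have hchord : ∀ x ∈ Set.Icc (0 : ℝ) 1,
      f x * exp (-H * x) ≤ exp (-H) * f x + exp (-H) * (exp H - 1) * (f x * (1 - x)) := by
    rintro x ⟨hx₀, hx₁⟩
    have hfx : 0 ≤ f x := by positivity
    have hexp := exp_mul_le_one_add_mul_exp_sub_one (sub_nonneg.2 hx₁) (by linarith) H
    rw [show -H * x = -H + (1 - x) * H by ring, exp_add]
    linear_combination mul_le_mul_of_nonneg_left hexp (mul_nonneg hfx (exp_pos (-H)).le)
  calc _ ≤ ∫ x in (0 : ℝ)..1, exp (-H) * f x + exp (-H) * (exp H - 1) * (f x * (1 - x)) :=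
        integral_mono_on zero_le_one (hf.mul_continuousOn (by fun_prop))
          ((hf.const_mul _).add (hf₁.const_mul _)) hchord
    _ = exp (-H) * beta a b + exp (-H) * (exp H - 1) * (beta a b * (b / (a + b))) := by
        rw [integral_add (hf.const_mul _) (hf₁.const_mul _),
          integral_const_mul, integral_const_mul, integral_rpow_mul_one_sub_rpow ha hb,
          integral_rpow_mul_one_sub_rpow_mul_one_sub ha hb]
    _ ≤ _ := by
        have hgap : 0 ≤ exp (-H) * beta a b * (b / (a + b)) := by positivity [beta_pos ha hb]
        rw [beta] at hgap ⊢
        linear_combination hgap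

/-- Upper bound on the normalizing constant (part of Lemma 3):
`∫₀¹ ω^(a-1)(1-ω)^(b-1)e^(-Hω) dω ≤ e^(-H) B(a,b) (1 + (b/(a+b)) e^H)`. -/
theorem fhs_normalizing_upper (a b H : ℝ) (ha : 0 < a) (hb : 0 < b) (hH : 0 ≤ H) :
    ∫ ω in (0:ℝ)..1, ω ^ (a - 1) * (1 - ω) ^ (b - 1) * Real.exp (-H * ω) ≤
      Real.exp (-H) * (Real.Gamma a * Real.Gamma b / Real.Gamma (a + b)) *
        (1 + (b / (a + b)) * Real.exp H) :=
  fhs_normalizing_upper_general a b H ha hb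
end

section
/- Let β given (Y, ω) be distributed as N(β̃_ω, Σ̃_ω) with β̃_ω = (ΦᵀΦ + (ω/(1-ω))ΦᵀQ̄₀Φ)⁻¹ΦᵀY and Σ̃_ω = σ²(ΦᵀΦ + (ω/(1-ω))ΦᵀQ̄₀Φ)⁻¹, where Q̄₀ = I - Q₀. If 𝔏(Φ₀) ⊊ 𝔏(Φ), then the conditional mean of the fitted vector satisfies E[Φβ | Y, ω] = (1-ω)·Q_Φ·Y + ω·Q₀·Y. -/
/-!
Write `G = (ΦᵀΦ)⁻¹`, `Q = ΦGΦᵀ` and `P = ΦᵀQ₀Φ`. Since `𝔏(Φ₀) ⊆ 𝔏(Φ)`, `QQ₀ = Q₀Q = Q₀`, hence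
`PGP = P`, and the posterior precision `ΦᵀΦ + (ω/(1-ω))(ΦᵀΦ - P)` then has the explicit inverse
`(1-ω)G + ωGPG`. Sandwiched between `Φ` and `Φᵀ` this becomes `(1-ω)Q + ωQQ₀Q = (1-ω)Q + ωQ₀`;
linearity of the integral moves `Φ` inside the posterior mean.
-/

open Matrix MeasureTheory

namespace Matrix

variable {m n : Type*} [Fintype n]

theorem isUnit_transpose_mul_self_of_rank_eq {R : Type*} [Fintype m] [DecidableEq n] [Field R]
    [LinearOrder R] [IsStrictOrderedRing R] (A : Matrix m n R) (h : A.rank = Fintype.card n) :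
    IsUnit (Aᵀ * A) := by
  rw [← mulVec_surjective_iff_isUnit]
  refine LinearMap.range_eq_top.mp
    (Submodule.eq_top_of_finrank_eq (S := LinearMap.range (Aᵀ * A).mulVecLin) ?_)
  rw [Module.finrank_fintype_fun_eq_card, ← h, ← rank_transpose_mul_self A]
  rfl

theorem range_mulVecLin_mul_le {o R : Type*} [Fintype o] [CommSemiring R] (A : Matrix m n R)
    (B : Matrix n o R) : LinearMap.range (A * B).mulVecLin ≤ LinearMap.range A.mulVecLin := by
  rw [mulVecLin_mul]
  exact LinearMap.range_comp_le_range _ _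

theorem inv_add_smul_sub_eq_s8 {K : Type*} [DecidableEq n] [Field K] {S G P : Matrix n n K} {t : K}
    (ht : t ≠ 1) (hSG : S * G = 1) (hPGP : P * G * P = P) :
    (S + (t / (1 - t)) • (S - P))⁻¹ = (1 - t) • G + t • (G * P * G) := by
  apply inv_eq_right_inv
  have hPGPG : P * (G * P * G) = P * G := by rw [← mul_assoc, ← mul_assoc, hPGP]
  have hSGPG : S * (G * P * G) = P * G := by rw [mul_assoc, ← mul_assoc S, hSG, one_mul]
  simp only [mul_add, add_mul, sub_mul, Matrix.mul_smul, Matrix.smul_mul, hSG, hPGPG, hSGPG]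
  have h1t : 1 - t ≠ 0 := sub_ne_zero.mpr ht.symm
  match_scalars <;> field_simp <;> ring

section ColSpaceProj

variable [Fintype m] [DecidableEq n] {R : Type*} [CommRing R]

noncomputable def colSpaceProj (A : Matrix m n R) : Matrix m m R := A * (Aᵀ * A)⁻¹ * Aᵀ

theorem transpose_colSpaceProj (A : Matrix m n R) : (colSpaceProj A)ᵀ = colSpaceProj A := by
  simp only [colSpaceProj, transpose_mul, transpose_transpose, transpose_nonsing_inv,
    Matrix.mul_assoc]

theorem colSpaceProj_mul_self {A : Matrix m n R} (hA : IsUnit (Aᵀ * A)) :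
    colSpaceProj A * A = A := by
  rw [colSpaceProj, Matrix.mul_assoc, Matrix.mul_assoc,
    nonsing_inv_mul _ ((isUnit_iff_isUnit_det _).mp hA), Matrix.mul_one]

theorem colSpaceProj_mul_of_range_le {o : Type*} [Fintype o] {A : Matrix m n R}
    {B : Matrix m o R} (hA : IsUnit (Aᵀ * A))
    (hB : LinearMap.range B.mulVecLin ≤ LinearMap.range A.mulVecLin) :
    colSpaceProj A * B = B := by
  refine ext_iff_mulVec.mpr fun v => ?_
  obtain ⟨w, hw⟩ := hB (LinearMap.mem_range_self B.mulVecLin v)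
  rw [← mulVec_mulVec, ← mulVecLin_apply B, ← hw, mulVecLin_apply, mulVec_mulVec,
    colSpaceProj_mul_self hA]

theorem colSpaceProj_mul_colSpaceProj_of_range_le {o : Type*} [Fintype o] [DecidableEq o]
    {A : Matrix m n R} {B : Matrix m o R} (hA : IsUnit (Aᵀ * A))
    (hBA : LinearMap.range B.mulVecLin ≤ LinearMap.range A.mulVecLin) :
    colSpaceProj A * colSpaceProj B = colSpaceProj B := by
  refine colSpaceProj_mul_of_range_le hA (le_trans ?_ hBA)
  rw [colSpaceProj, Matrix.mul_assoc]
  exact range_mulVecLin_mul_le _ _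

theorem colSpaceProj_mul_colSpaceProj_of_range_le' {o : Type*} [Fintype o] [DecidableEq o]
    {A : Matrix m n R} {B : Matrix m o R} (hA : IsUnit (Aᵀ * A))
    (hBA : LinearMap.range B.mulVecLin ≤ LinearMap.range A.mulVecLin) :
    colSpaceProj B * colSpaceProj A = colSpaceProj B := by
  simpa only [transpose_mul, transpose_colSpaceProj] using
    congrArg transpose (colSpaceProj_mul_colSpaceProj_of_range_le hA hBA)

end ColSpaceProj

theorem mul_inv_transpose_mul_self_add_smul_mul_transpose_eq {o K : Type*} [Fintype m]
    [DecidableEq m] [DecidableEq n] [Fintype o] [DecidableEq o] [Field K]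
    {A : Matrix m n K} {B : Matrix m o K}
    (hA : IsUnit (Aᵀ * A)) (hB : IsUnit (Bᵀ * B))
    (hBA : LinearMap.range B.mulVecLin ≤ LinearMap.range A.mulVecLin) {t : K} (ht : t ≠ 1) :
    A * (Aᵀ * A + (t / (1 - t)) • (Aᵀ * (1 - colSpaceProj B) * A))⁻¹ * Aᵀ =
      (1 - t) • colSpaceProj A + t • colSpaceProj B := by
  set G := (Aᵀ * A)⁻¹
  set Q₀ := colSpaceProj B
  have hQ₀Q : Q₀ * colSpaceProj A = Q₀ := colSpaceProj_mul_colSpaceProj_of_range_le' hA hBA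
  have hQQ₀ : colSpaceProj A * Q₀ = Q₀ := colSpaceProj_mul_colSpaceProj_of_range_le hA hBA
  have hQ₀Q₀ : Q₀ * Q₀ = Q₀ := colSpaceProj_mul_colSpaceProj_of_range_le hB le_rfl
  have hSG : Aᵀ * A * G = 1 := mul_nonsing_inv _ ((isUnit_iff_isUnit_det _).mp hA)
  have hPGP : Aᵀ * Q₀ * A * G * (Aᵀ * Q₀ * A) = Aᵀ * Q₀ * A := by
    calc Aᵀ * Q₀ * A * G * (Aᵀ * Q₀ * A) = Aᵀ * (Q₀ * colSpaceProj A * Q₀) * A := by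
          simp only [colSpaceProj, G, Matrix.mul_assoc]
      _ = Aᵀ * Q₀ * A := by rw [hQ₀Q, hQ₀Q₀]
  have hQQ₀Q : A * (G * (Aᵀ * Q₀ * A) * G) * Aᵀ = Q₀ := by
    calc A * (G * (Aᵀ * Q₀ * A) * G) * Aᵀ = colSpaceProj A * Q₀ * colSpaceProj A := by
          simp only [colSpaceProj, G, Matrix.mul_assoc]
      _ = Q₀ := by rw [hQQ₀, hQ₀Q]
  rw [Matrix.mul_sub, Matrix.mul_one, Matrix.sub_mul, inv_add_smul_sub_eq_s8 ht hSG hPGP,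
    Matrix.mul_add, Matrix.add_mul, Matrix.mul_smul, Matrix.mul_smul, Matrix.smul_mul,
    Matrix.smul_mul, hQQ₀Q]
  rfl

end Matrix

theorem integral_mulVec_apply {m n Ω : Type*} [Fintype n] [MeasurableSpace Ω] {μ : Measure Ω}
    {X : Ω → n → ℝ} (hX : ∀ j, Integrable (fun ω => X ω j) μ) (A : Matrix m n ℝ) (i : m) :
    ∫ ω, (A *ᵥ X ω) i ∂μ = (A *ᵥ fun j => ∫ ω, X ω j ∂μ) i := by
  simp only [mulVec, dotProduct]
  rw [integral_finsetSum _ fun j _ => (hX j).const_mul _]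
  simp only [integral_const_mul]

theorem fhs_posterior_mean_general (n d₀ k : ℕ)
    (Φ₀ : Matrix (Fin n) (Fin d₀) ℝ) (Φ : Matrix (Fin n) (Fin k) ℝ)
    (hrank₀ : Φ₀.rank = d₀) (hrank : Φ.rank = k)
    (hsub : LinearMap.range Φ₀.mulVecLin < LinearMap.range Φ.mulVecLin)
    (Y : Fin n → ℝ) (ω : ℝ) (hω1 : ω < 1)
    (μ : Measure (Fin k → ℝ))
    (hint : ∀ j : Fin k, Integrable (fun β : Fin k → ℝ => β j) μ)
    (hmean : ∀ j : Fin k,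
      (∫ β, β j ∂μ) =
        ((Φᵀ * Φ + (ω / (1 - ω)) •
            (Φᵀ * (1 - Φ₀ * (Φ₀ᵀ * Φ₀)⁻¹ * Φ₀ᵀ) * Φ))⁻¹ *ᵥ (Φᵀ *ᵥ Y)) j) :
    ∀ i : Fin n,
      (∫ β, (Φ *ᵥ β) i ∂μ) =
        ((1 - ω) • ((Φ * (Φᵀ * Φ)⁻¹ * Φᵀ) *ᵥ Y) +
          ω • ((Φ₀ * (Φ₀ᵀ * Φ₀)⁻¹ * Φ₀ᵀ) *ᵥ Y)) i := by
  intro i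
  have hΦ := isUnit_transpose_mul_self_of_rank_eq Φ (by rwa [Fintype.card_fin])
  have hΦ₀ := isUnit_transpose_mul_self_of_rank_eq Φ₀ (by rwa [Fintype.card_fin])
  have hhat := mul_inv_transpose_mul_self_add_smul_mul_transpose_eq hΦ hΦ₀ hsub.le hω1.ne
  rw [integral_mulVec_apply hint, show (fun j => ∫ β, β j ∂μ) = _ from funext hmean,
    mulVec_mulVec, mulVec_mulVec]
  simpa only [colSpaceProj, add_mulVec, smul_mulVec] using congrFun (congrArg (· *ᵥ Y) hhat) i

/-- Lemma 1: if `β | (Y, ω)` has a distribution with mean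
`β̃_ω = (ΦᵀΦ + (ω/(1-ω))ΦᵀQ̄₀Φ)⁻¹ ΦᵀY` (e.g. the Gaussian conditional
posterior `N(β̃_ω, Σ̃_ω)`), and `𝔏(Φ₀) ⊊ 𝔏(Φ)` with both of full column rank,
then the conditional mean of the fitted vector is
`E[Φβ | Y, ω] = (1-ω) Q_Φ Y + ω Q₀ Y`. -/
theorem fhs_posterior_mean (n d₀ k : ℕ)
    (Φ₀ : Matrix (Fin n) (Fin d₀) ℝ) (Φ : Matrix (Fin n) (Fin k) ℝ)
    (hrank₀ : Φ₀.rank = d₀) (hrank : Φ.rank = k) (hdk : d₀ < k)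
    (hsub : LinearMap.range Φ₀.mulVecLin < LinearMap.range Φ.mulVecLin)
    (Y : Fin n → ℝ) (ω : ℝ) (hω0 : 0 < ω) (hω1 : ω < 1) (σ : ℝ) (hσ : 0 < σ)
    (μ : Measure (Fin k → ℝ)) [IsProbabilityMeasure μ]
    (hint : ∀ j : Fin k, Integrable (fun β : Fin k → ℝ => β j) μ)
    (hmean : ∀ j : Fin k,
      (∫ β, β j ∂μ) =
        ((Φᵀ * Φ + (ω / (1 - ω)) •
            (Φᵀ * (1 - Φ₀ * (Φ₀ᵀ * Φ₀)⁻¹ * Φ₀ᵀ) * Φ))⁻¹ *ᵥ (Φᵀ *ᵥ Y)) j) :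
    ∀ i : Fin n,
      (∫ β, (Φ *ᵥ β) i ∂μ) =
        ((1 - ω) • ((Φ * (Φᵀ * Φ)⁻¹ * Φᵀ) *ᵥ Y) +
          ω • ((Φ₀ * (Φ₀ᵀ * Φ₀)⁻¹ * Φ₀ᵀ) *ᵥ Y)) i :=
  fhs_posterior_mean_general n d₀ k Φ₀ Φ hrank₀ hrank hsub Y ω hω1 μ hint hmean
end
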